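/- arXiv:math/9910128 — 2 statements merged into one kernel-verified Lean document; each statement's English description precedes it below -/
import Mathlib

section
/- For ν > -1, the inequalities [σ_n(ν)]^{-1/n} < j_{ν1}^2 < σ_n(ν)/σ_{n+1}(ν) hold for every n ≥ 1, where j_{ν1} is the smallest positive zero of J_ν. -/
open Real

/-- The Bessel function of the first kind `J_ν(x)`, for `x > 0`, defined by its series. -/
noncomputable def besselJ (ν : ℝ) (x : ℝ) : ℝ :=
  ∑' n : ℕ, (-1 : ℝ) ^ n * (x / 2) ^ (2 * (n : ℝ) + ν) / (n.factorial * Real.Gamma (ν + n + 1))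

/-- Euler–Rayleigh inequalities: for `ν > -1` and every `n ≥ 1`,
`σ_n(ν)^{-1/n} < j_{ν1}² < σ_n(ν)/σ_{n+1}(ν)`, where `j_{ν1}` is the smallest
positive zero of `J_ν` and `σ_m(ν) = Σ_k j_{νk}^{-2m}`. -/
theorem euler_rayleigh_inequalities (ν : ℝ) (hν : -1 < ν) (j : ℕ → ℝ)
    (hpos : ∀ k, 0 < j k) (hmono : StrictMono j)
    (hzero : ∀ k, besselJ ν (j k) = 0)
    (hall : ∀ x, 0 < x → besselJ ν x = 0 → ∃ k, x = j k)
    (σ : ℕ → ℝ)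
    (hσ : ∀ m, σ m = ∑' k : ℕ, ((j k) ^ (2 * m))⁻¹)
    (hsum : ∀ m, 1 ≤ m → Summable fun k => ((j k) ^ (2 * m))⁻¹)
    (n : ℕ) (hn : 1 ≤ n) :
    (σ n) ^ (-(1 : ℝ) / n) < (j 0) ^ 2 ∧ (j 0) ^ 2 < σ n / σ (n + 1) := by
  have hj0 : 0 < j 0 := hpos 0
  have hj01 : j 0 < j 1 := hmono (by norm_num)
  have hjle : ∀ k, j 0 ≤ j k := fun k => (hmono.monotone (Nat.zero_le k))
  have hnn : (0 : ℕ) < n := hn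
  have hn0 : (n : ℝ) ≠ 0 := Nat.cast_ne_zero.mpr (by omega)
  have hterm : ∀ m k, 0 < ((j k) ^ (2 * m))⁻¹ :=
    fun m k => inv_pos.mpr (pow_pos (hpos k) _)
  -- σ n > (j 0)^(-2n)
  have hkey : ((j 0) ^ (2 * n))⁻¹ < σ n := by
    rw [hσ n]
    have h := Summable.tsum_lt_tsum_of_nonneg (i := 1)
      (f := fun k => if k = 0 then ((j 0) ^ (2 * n))⁻¹ else 0)
      (g := fun k => ((j k) ^ (2 * n))⁻¹)
      (fun b => by positivity)
      (fun b => by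
        by_cases hb : b = 0
        · simp [hb]
        · simp [hb, (hterm n b).le])
      (by simpa using hterm n 1)
      (hsum n hn)
    simpa [tsum_ite_eq] using h
  have hσnpos : 0 < σ n := lt_trans (hterm n 0) hkey
  constructor
  · -- first inequality
    have hexp : -(1 : ℝ) / n < 0 := by
      apply div_neg_of_neg_of_pos <;> [norm_num; exact_mod_cast hnn]
    have h1 : (σ n) ^ (-(1 : ℝ) / n) < (((j 0) ^ (2 * n))⁻¹) ^ (-(1 : ℝ) / n) :=
      Real.rpow_lt_rpow_of_neg (inv_pos.mpr (pow_pos hj0 _)) hkey hexp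
    have h2 : (((j 0) ^ (2 * n))⁻¹) ^ (-(1 : ℝ) / n) = (j 0) ^ 2 := by
      rw [← Real.rpow_natCast (j 0) (2 * n), ← Real.rpow_neg hj0.le,
        ← Real.rpow_natCast (j 0) 2, ← Real.rpow_mul hj0.le]
      congr 1
      push_cast
      field_simp
    rwa [h2] at h1
  · -- second inequality
    have hstep : (j 0) ^ 2 * σ (n + 1) < σ n := by
      rw [hσ n, hσ (n + 1), ← tsum_mul_left]
      refine Summable.tsum_lt_tsum_of_nonneg (i := 1)
        (fun b => (mul_pos (pow_pos hj0 2) (hterm (n + 1) b)).le)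
        (fun b => ?_) ?_ (hsum n hn)
      · have hb : (j b) ^ (2 * (n + 1)) = (j b) ^ (2 * n) * (j b) ^ 2 := by ring
        rw [hb, mul_inv]
        rw [mul_comm ((j b ^ (2 * n))⁻¹) ((j b ^ 2)⁻¹), ← mul_assoc]
        have : (j 0) ^ 2 * ((j b) ^ 2)⁻¹ ≤ 1 := by
          rw [mul_inv_le_iff₀ (pow_pos (hpos b) 2), one_mul]
          exact pow_le_pow_left₀ hj0.le (hjle b) 2
        calc (j 0) ^ 2 * ((j b) ^ 2)⁻¹ * ((j b) ^ (2 * n))⁻¹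
            ≤ 1 * ((j b) ^ (2 * n))⁻¹ := by
              exact mul_le_mul_of_nonneg_right this (hterm n b).le
          _ = ((j b) ^ (2 * n))⁻¹ := one_mul _
      · have hb : (j 1) ^ (2 * (n + 1)) = (j 1) ^ (2 * n) * (j 1) ^ 2 := by ring
        rw [hb, mul_inv]
        rw [mul_comm ((j 1 ^ (2 * n))⁻¹) ((j 1 ^ 2)⁻¹), ← mul_assoc]
        have h1 : (j 0) ^ 2 * ((j 1) ^ 2)⁻¹ < 1 := by
          rw [mul_inv_lt_iff₀ (pow_pos (hpos 1) 2), one_mul]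
          exact pow_lt_pow_left₀ hj01 hj0.le (by norm_num)
        calc (j 0) ^ 2 * ((j 1) ^ 2)⁻¹ * ((j 1) ^ (2 * n))⁻¹
            < 1 * ((j 1) ^ (2 * n))⁻¹ :=
              mul_lt_mul_of_pos_right h1 (hterm n 1)
          _ = ((j 1) ^ (2 * n))⁻¹ := one_mul _
    have hσn1pos : 0 < σ (n + 1) := by
      rw [hσ (n + 1)]
      exact Summable.tsum_pos (hsum (n + 1) (by omega)) (fun k => (hterm (n + 1) k).le) 0
        (hterm (n + 1) 0)
    rw [lt_div_iff₀ hσn1pos]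
    linarith [hstep]
end

section
/- The function y = N_ν(z) = a z² J_ν''(z) + b z J_ν'(z) + c J_ν(z) satisfies the differential equation z² y'' + A(z) z y' + [B(z) + z² − ν²] y = 0, where A(z) = (−3a²z⁴ + p z² + q)/(a²z⁴ − p z² + q), B(z) = (2a(a+b)z⁴ + 2r z²)/(a²z⁴ − p z² + q), with p = 2a(aν² + c) + (a² − b²), q = (aν² + c)² − ν²(a − b)², r = aν²(3a − b) + c(a + b), at all points where a²z⁴ − p z² + q ≠ 0. -/
open Real

/-- `N_ν(z) = a z² J_ν''(z) + b z J_ν'(z) + c J_ν(z)`. -/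
noncomputable def mercerN (a b c ν : ℝ) (z : ℝ) : ℝ :=
  a * z ^ 2 * iteratedDeriv 2 (besselJ ν) z + b * z * deriv (besselJ ν) z + c * besselJ ν z

/-!
Termwise differentiation of the series gives `J_ν` and `J_ν'` on `(0, ∞)`, and a telescoping of
the series shows that `J_ν` solves Bessel's equation there. For any solution `f`, Bessel's equation
is a first-order linear system for the pair `(f, f')`, so the functions `α f' + β f` with
differentiable coefficients are closed under differentiation. Eliminating `f''` gives
`N = (b - a) z f' + (c + aν² - az²) f`; differentiating twice writes `N'` and `N''` in the same
form, and the claimed equation reduces to two rational identities in `z`, the coefficients of `f'`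
and of `f`.
-/

noncomputable def besselCoeff (ν : ℝ) (n : ℕ) : ℝ :=
  (-1 : ℝ) ^ n / (n.factorial * Real.Gamma (ν + n + 1))

theorem besselCoeff_succ (ν : ℝ) (n : ℕ) :
    ((n : ℝ) + 1) * (ν + n + 1) * besselCoeff ν (n + 1) = -besselCoeff ν n := by
  have hfac : (((n + 1).factorial : ℕ) : ℝ) = ((n : ℝ) + 1) * (n.factorial : ℝ) := by
    push_cast [Nat.factorial_succ]; ring
  have harg : ν + ((n + 1 : ℕ) : ℝ) + 1 = (ν + n + 1) + 1 := by push_cast; ring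
  unfold besselCoeff
  rw [harg, hfac]
  rcases eq_or_ne (ν + n + 1) 0 with h | h
  · simp [h, Real.Gamma_zero]
  rw [Real.Gamma_add_one h]
  rcases eq_or_ne (Real.Gamma (ν + n + 1)) 0 with hΓ | hΓ
  · simp [hΓ]
  field_simp
  ring

theorem mul_abs_besselCoeff_succ_le (ν : ℝ) (n : ℕ) (h : 0 ≤ ν + n) :
    ((n : ℝ) + 1) * |besselCoeff ν (n + 1)| ≤ |besselCoeff ν n| := by
  have habs : ((n : ℝ) + 1) * (ν + n + 1) * |besselCoeff ν (n + 1)| = |besselCoeff ν n| := by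
    rw [← abs_of_pos (show (0 : ℝ) < ((n : ℝ) + 1) * (ν + n + 1) by positivity), ← abs_mul,
      besselCoeff_succ, abs_neg]
  calc ((n : ℝ) + 1) * |besselCoeff ν (n + 1)|
      = ((n : ℝ) + 1) * 1 * |besselCoeff ν (n + 1)| := by ring
    _ ≤ ((n : ℝ) + 1) * (ν + n + 1) * |besselCoeff ν (n + 1)| := by gcongr; linarith
    _ = |besselCoeff ν n| := habs

theorem summable_abs_besselCoeff_mul (ν : ℝ) (K : ℕ) {R : ℝ} (hR : 0 ≤ R) :
    Summable fun n : ℕ => |besselCoeff ν n| * ((n : ℝ) + 1) ^ K * R ^ n := by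
  refine summable_of_ratio_norm_eventually_le (r := 1 / 2) (by norm_num) ?_
  obtain ⟨N, hN⟩ := exists_nat_ge (|ν| + 2 * 2 ^ K * R)
  filter_upwards [Filter.eventually_ge_atTop N] with n hn
  have hnN : (N : ℝ) ≤ n := by exact_mod_cast hn
  have hpos : (0 : ℝ) < n + 1 := by positivity
  have hcoeff := mul_abs_besselCoeff_succ_le ν n
    (by nlinarith [neg_abs_le ν, pow_pos (two_pos (α := ℝ)) K])
  have hratio : 2 ^ K * R / ((n : ℝ) + 1) ≤ 1 / 2 := by
    rw [div_le_div_iff₀ hpos two_pos]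
    nlinarith [abs_nonneg ν]
  have hpow : ((n : ℝ) + 1 + 1) ^ K ≤ 2 ^ K * ((n : ℝ) + 1) ^ K := by
    rw [← mul_pow]
    exact pow_le_pow_left₀ (by positivity) (by linarith) K
  rw [Real.norm_of_nonneg (by positivity), Real.norm_of_nonneg (by positivity)]
  calc |besselCoeff ν (n + 1)| * (((n + 1 : ℕ) : ℝ) + 1) ^ K * R ^ (n + 1)
      ≤ |besselCoeff ν (n + 1)| * (2 ^ K * ((n : ℝ) + 1) ^ K) * R ^ (n + 1) := by
        push_cast
        gcongr
    _ = ((n + 1) * |besselCoeff ν (n + 1)|) * ((n : ℝ) + 1) ^ K * R ^ n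
          * (2 ^ K * R / ((n : ℝ) + 1)) := by
        field_simp
        ring
    _ ≤ |besselCoeff ν n| * ((n : ℝ) + 1) ^ K * R ^ n * (1 / 2) := by
        gcongr
    _ = 1 / 2 * (|besselCoeff ν n| * ((n : ℝ) + 1) ^ K * R ^ n) := by ring

theorem abs_prod_two_mul_add_sub_div_two_le (ν : ℝ) (n k : ℕ) :
    |∏ j ∈ Finset.range k, (2 * (n : ℝ) + ν - j) / 2| ≤ (((n : ℝ) + 1) * (1 + |ν| + k)) ^ k := by
  rw [Finset.abs_prod]
  calc ∏ j ∈ Finset.range k, |(2 * (n : ℝ) + ν - j) / 2|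
      ≤ ∏ _j ∈ Finset.range k, ((n : ℝ) + 1) * (1 + |ν| + k) := by
        refine Finset.prod_le_prod (fun _ _ => abs_nonneg _) fun j hj => abs_le.mpr ⟨?_, ?_⟩
        all_goals
          have hjk : (j : ℝ) ≤ k := by exact_mod_cast (Finset.mem_range.mp hj).le
          nlinarith [neg_abs_le ν, le_abs_self ν, abs_nonneg ν, j.cast_nonneg (α := ℝ),
            mul_nonneg (n.cast_nonneg (α := ℝ)) (abs_nonneg ν),
            mul_nonneg (n.cast_nonneg (α := ℝ)) (k.cast_nonneg (α := ℝ))]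
    _ = (((n : ℝ) + 1) * (1 + |ν| + k)) ^ k := by rw [Finset.prod_const, Finset.card_range]

/-- The `k`-th derivative of the term `c_n (z/2)^(2n+ν)` of the series of `J_ν`. -/
noncomputable def besselTerm (ν : ℝ) (k n : ℕ) (z : ℝ) : ℝ :=
  besselCoeff ν n * (∏ j ∈ Finset.range k, (2 * (n : ℝ) + ν - j) / 2)
    * (z / 2) ^ (2 * (n : ℝ) + ν - k)

noncomputable def besselJDerivSeries (ν : ℝ) (k : ℕ) (z : ℝ) : ℝ :=
  ∑' n, besselTerm ν k n z

theorem besselJ_eq_besselJDerivSeries_zero (ν : ℝ) : besselJ ν = besselJDerivSeries ν 0 := by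
  funext x
  refine tsum_congr fun n => ?_
  simp only [besselTerm, besselCoeff, Finset.range_zero, Finset.prod_empty, Nat.cast_zero,
    sub_zero, mul_one]
  ring

theorem abs_besselTerm_le (ν : ℝ) (k n : ℕ) {z x : ℝ} (hz : 0 < z) (hx₁ : z / 2 < x)
    (hx₂ : x < 2 * z) :
    |besselTerm ν k n x| ≤ ((1 + |ν| + k) ^ k * max ((z / 4) ^ (ν - k)) (z ^ (ν - k)))
      * (|besselCoeff ν n| * ((n : ℝ) + 1) ^ k * (z ^ 2) ^ n) := by
  have hx : 0 < x / 2 := by linarith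
  have hsplit : (x / 2) ^ (2 * (n : ℝ) + ν - k) = ((x / 2) ^ 2) ^ n * (x / 2) ^ (ν - k) := by
    rw [show 2 * (n : ℝ) + ν - k = ((2 * n : ℕ) : ℝ) + (ν - k) by push_cast; ring,
      Real.rpow_add hx, Real.rpow_natCast, pow_mul]
  have hpow : ((x / 2) ^ 2) ^ n ≤ (z ^ 2) ^ n := by gcongr; linarith
  have hrpow : (x / 2) ^ (ν - k) ≤ max ((z / 4) ^ (ν - k)) (z ^ (ν - k)) := by
    rcases le_or_gt 0 (ν - k) with he | he
    · exact le_max_of_le_right (Real.rpow_le_rpow hx.le (by linarith) he)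
    · exact le_max_of_le_left (Real.rpow_le_rpow_of_nonpos (by positivity) (by linarith) he.le)
  have hprod := abs_prod_two_mul_add_sub_div_two_le ν n k
  calc |besselTerm ν k n x|
      = |besselCoeff ν n| * |∏ j ∈ Finset.range k, (2 * (n : ℝ) + ν - j) / 2|
          * (((x / 2) ^ 2) ^ n * (x / 2) ^ (ν - k)) := by
        rw [besselTerm, abs_mul, abs_mul, hsplit,
          abs_of_nonneg (a := ((x / 2) ^ 2) ^ n * (x / 2) ^ (ν - k)) (by positivity)]
    _ ≤ |besselCoeff ν n| * (((n : ℝ) + 1) * (1 + |ν| + k)) ^ k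
          * ((z ^ 2) ^ n * max ((z / 4) ^ (ν - k)) (z ^ (ν - k))) := by
        gcongr
    _ = _ := by rw [mul_pow]; ring

theorem summable_besselTerm (ν : ℝ) (k : ℕ) {z : ℝ} (hz : 0 < z) :
    Summable fun n => besselTerm ν k n z :=
  ((summable_abs_besselCoeff_mul ν k (sq_nonneg z)).mul_left _).of_norm_bounded fun n =>
    abs_besselTerm_le ν k n hz (by linarith) (by linarith)

theorem hasDerivAt_besselTerm (ν : ℝ) (k n : ℕ) {x : ℝ} (hx : 0 < x) :
    HasDerivAt (besselTerm ν k n) (besselTerm ν (k + 1) n x) x := by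
  have hhalf : HasDerivAt (fun y : ℝ => y / 2) (1 / 2) x := by
    simpa using (hasDerivAt_id x).div_const 2
  have hrpow := (Real.hasDerivAt_rpow_const (p := 2 * (n : ℝ) + ν - k)
    (Or.inl (show x / 2 ≠ 0 by positivity))).comp x hhalf
  refine (hrpow.const_mul (besselCoeff ν n * ∏ j ∈ Finset.range k, (2 * (n : ℝ) + ν - j) / 2)
    ).congr_deriv ?_
  rw [besselTerm, Finset.prod_range_succ, show 2 * (n : ℝ) + ν - ((k + 1 : ℕ) : ℝ)
    = 2 * (n : ℝ) + ν - k - 1 by push_cast; ring]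
  ring

theorem hasDerivAt_besselJDerivSeries (ν : ℝ) (k : ℕ) {z : ℝ} (hz : 0 < z) :
    HasDerivAt (besselJDerivSeries ν k) (besselJDerivSeries ν (k + 1) z) z := by
  have hmem : z ∈ Set.Ioo (z / 2) (2 * z) := ⟨by linarith, by linarith⟩
  exact hasDerivAt_tsum_of_isPreconnected
    ((summable_abs_besselCoeff_mul ν (k + 1) (sq_nonneg z)).mul_left _) isOpen_Ioo
    (convex_Ioo _ _).isPreconnected
    (fun n y hy => hasDerivAt_besselTerm ν k n (by linarith [hy.1]))
    (fun n y hy => abs_besselTerm_le ν (k + 1) n hz hy.1 hy.2) hmem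
    (summable_besselTerm ν k hz) hmem

theorem besselTerm_ode (ν : ℝ) (n : ℕ) {z : ℝ} (hz : 0 < z) :
    z ^ 2 * besselTerm ν 2 n z + z * besselTerm ν 1 n z + (z ^ 2 - ν ^ 2) * besselTerm ν 0 n z
      = 4 * n * (n + ν) * besselTerm ν 0 n z + z ^ 2 * besselTerm ν 0 n z := by
  have hz2 : 0 < z / 2 := by positivity
  simp only [besselTerm, Finset.prod_range_succ, Finset.range_zero, Finset.prod_empty,
    Nat.cast_zero, Nat.cast_one, Nat.cast_ofNat, sub_zero, Real.rpow_sub hz2, Real.rpow_one,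
    Real.rpow_two]
  field_simp
  ring

theorem besselTerm_zero_succ (ν : ℝ) (n : ℕ) {z : ℝ} (hz : 0 < z) :
    4 * ((n + 1 : ℕ) : ℝ) * ((n + 1 : ℕ) + ν) * besselTerm ν 0 (n + 1) z
      = -(z ^ 2 * besselTerm ν 0 n z) := by
  have hpow : (z / 2) ^ (2 * ((n + 1 : ℕ) : ℝ) + ν) = (z / 2) ^ (2 * (n : ℝ) + ν) * (z / 2) ^ 2 := by
    rw [← Real.rpow_natCast (z / 2) 2, ← Real.rpow_add (by positivity)]
    push_cast
    ring_nf
  simp only [besselTerm, Finset.range_zero, Finset.prod_empty, mul_one, Nat.cast_zero, sub_zero,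
    hpow]
  push_cast
  linear_combination (4 * (z / 2) ^ (2 * (n : ℝ) + ν) * (z / 2) ^ 2)
    * besselCoeff_succ ν n

theorem besselJDerivSeries_ode (ν : ℝ) {z : ℝ} (hz : 0 < z) :
    z ^ 2 * besselJDerivSeries ν 2 z + z * besselJDerivSeries ν 1 z
      + (z ^ 2 - ν ^ 2) * besselJDerivSeries ν 0 z = 0 := by
  set H : ℕ → ℝ := fun n => 4 * n * (n + ν) * besselTerm ν 0 n z with hH
  have hsucc : (fun n => H (n + 1)) = fun n => -z ^ 2 * besselTerm ν 0 n z := by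
    funext n
    simpa [hH] using besselTerm_zero_succ ν n hz
  have hsum_succ : Summable fun n => H (n + 1) := by
    rw [hsucc]; exact (summable_besselTerm ν 0 hz).mul_left _
  have hsum : Summable H := (summable_nat_add_iff 1).mp hsum_succ
  have hS (k : ℕ) := summable_besselTerm ν k hz
  calc z ^ 2 * besselJDerivSeries ν 2 z + z * besselJDerivSeries ν 1 z
        + (z ^ 2 - ν ^ 2) * besselJDerivSeries ν 0 z
      = ∑' n, (H n - H (n + 1)) := by
        simp only [besselJDerivSeries, ← tsum_mul_left]
        rw [← ((hS 2).mul_left _).tsum_add ((hS 1).mul_left _),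
          ← (((hS 2).mul_left _).add ((hS 1).mul_left _)).tsum_add ((hS 0).mul_left _)]
        refine tsum_congr fun n => ?_
        rw [besselTerm_ode ν n hz, show H (n + 1) = -z ^ 2 * besselTerm ν 0 n z from
          congrFun hsucc n]
        ring
    _ = 0 := by
        rw [hsum.tsum_sub hsum_succ, hsum.tsum_eq_zero_add]
        simp [hH]

theorem hasDerivAt_besselJ (ν : ℝ) {z : ℝ} (hz : 0 < z) :
    HasDerivAt (besselJ ν) (besselJDerivSeries ν 1 z) z := by
  rw [besselJ_eq_besselJDerivSeries_zero]
  exact hasDerivAt_besselJDerivSeries ν 0 hz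

theorem hasDerivAt_besselJDerivSeries_one (ν : ℝ) {z : ℝ} (hz : 0 < z) :
    HasDerivAt (besselJDerivSeries ν 1)
      (-besselJDerivSeries ν 1 z / z - (1 - ν ^ 2 / z ^ 2) * besselJ ν z) z := by
  refine (hasDerivAt_besselJDerivSeries ν 1 hz).congr_deriv ?_
  rw [besselJ_eq_besselJDerivSeries_zero]
  field_simp
  linear_combination besselJDerivSeries_ode ν hz

section Mercer

variable {ν : ℝ} {f f' : ℝ → ℝ}

theorem hasDerivAt_mul_add_mul_of_bessel
    (hf : ∀ z, 0 < z → HasDerivAt f (f' z) z)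
    (hf' : ∀ z, 0 < z → HasDerivAt f' (-f' z / z - (1 - ν ^ 2 / z ^ 2) * f z) z)
    {α β : ℝ → ℝ} {α' β' z : ℝ} (hz : 0 < z) (hα : HasDerivAt α α' z) (hβ : HasDerivAt β β' z) :
    HasDerivAt (fun x => α x * f' x + β x * f x)
      ((α' - α z / z + β z) * f' z + (β' - α z * (1 - ν ^ 2 / z ^ 2)) * f z) z := by
  exact ((hα.mul (hf' z hz)).add (hβ.mul (hf z hz))).congr_deriv (by ring)

theorem iteratedDeriv_two_eq_of_bessel
    (hf : ∀ z, 0 < z → HasDerivAt f (f' z) z)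
    (hf' : ∀ z, 0 < z → HasDerivAt f' (-f' z / z - (1 - ν ^ 2 / z ^ 2) * f z) z)
    {z : ℝ} (hz : 0 < z) :
    iteratedDeriv 2 f z = -f' z / z - (1 - ν ^ 2 / z ^ 2) * f z := by
  have hderiv : deriv f =ᶠ[nhds z] f' :=
    Filter.eventuallyEq_of_mem (Ioi_mem_nhds hz) fun x hx => (hf x hx).deriv
  rw [iteratedDeriv_succ, iteratedDeriv_one, hderiv.deriv_eq, (hf' z hz).deriv]

noncomputable def mercerComb (a b c : ℝ) (f : ℝ → ℝ) (z : ℝ) : ℝ :=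
  a * z ^ 2 * iteratedDeriv 2 f z + b * z * deriv f z + c * f z

theorem mercerComb_eq_of_bessel (a b c : ℝ)
    (hf : ∀ z, 0 < z → HasDerivAt f (f' z) z)
    (hf' : ∀ z, 0 < z → HasDerivAt f' (-f' z / z - (1 - ν ^ 2 / z ^ 2) * f z) z)
    {z : ℝ} (hz : 0 < z) :
    mercerComb a b c f z = (b - a) * z * f' z + (c + a * ν ^ 2 - a * z ^ 2) * f z := by
  rw [mercerComb, iteratedDeriv_two_eq_of_bessel hf hf' hz, (hf z hz).deriv]
  field_simp
  ring

theorem deriv_mercerComb_of_bessel (a b c : ℝ)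
    (hf : ∀ z, 0 < z → HasDerivAt f (f' z) z)
    (hf' : ∀ z, 0 < z → HasDerivAt f' (-f' z / z - (1 - ν ^ 2 / z ^ 2) * f z) z)
    {z : ℝ} (hz : 0 < z) :
    deriv (mercerComb a b c f) z =
      (c + a * ν ^ 2 - a * z ^ 2) * f' z + ((b - a) * ν ^ 2 * z⁻¹ - (a + b) * z) * f z := by
  have hN : mercerComb a b c f =ᶠ[nhds z]
      fun x => (b - a) * x * f' x + (c + a * ν ^ 2 - a * x ^ 2) * f x :=
    Filter.eventuallyEq_of_mem (Ioi_mem_nhds hz) fun x hx => mercerComb_eq_of_bessel a b c hf hf' hx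
  have hα : HasDerivAt (fun x => (b - a) * x) (b - a) z := by
    simpa using (hasDerivAt_id z).const_mul (b - a)
  have hβ : HasDerivAt (fun x => c + a * ν ^ 2 - a * x ^ 2) (-(2 * a * z)) z := by
    exact (((hasDerivAt_pow 2 z).const_mul a).const_sub (c + a * ν ^ 2)).congr_deriv (by ring)
  rw [hN.deriv_eq, (hasDerivAt_mul_add_mul_of_bessel hf hf' hz hα hβ).deriv]
  field_simp
  ring

theorem iteratedDeriv_two_mercerComb_of_bessel (a b c : ℝ)
    (hf : ∀ z, 0 < z → HasDerivAt f (f' z) z)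
    (hf' : ∀ z, 0 < z → HasDerivAt f' (-f' z / z - (1 - ν ^ 2 / z ^ 2) * f z) z)
    {z : ℝ} (hz : 0 < z) :
    iteratedDeriv 2 (mercerComb a b c f) z =
      (-(2 * a * z) - (c + a * ν ^ 2 - a * z ^ 2) / z + ((b - a) * ν ^ 2 * z⁻¹ - (a + b) * z))
          * f' z
        + ((b - a) * ν ^ 2 * -(z ^ 2)⁻¹ - (a + b)
          - (c + a * ν ^ 2 - a * z ^ 2) * (1 - ν ^ 2 / z ^ 2)) * f z := by
  have hN' : deriv (mercerComb a b c f) =ᶠ[nhds z] fun x =>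
      (c + a * ν ^ 2 - a * x ^ 2) * f' x + ((b - a) * ν ^ 2 * x⁻¹ - (a + b) * x) * f x :=
    Filter.eventuallyEq_of_mem (Ioi_mem_nhds hz) fun x hx =>
      deriv_mercerComb_of_bessel a b c hf hf' hx
  have hα : HasDerivAt (fun x => c + a * ν ^ 2 - a * x ^ 2) (-(2 * a * z)) z := by
    exact (((hasDerivAt_pow 2 z).const_mul a).const_sub (c + a * ν ^ 2)).congr_deriv (by ring)
  have hβ : HasDerivAt (fun x => (b - a) * ν ^ 2 * x⁻¹ - (a + b) * x)
      ((b - a) * ν ^ 2 * -(z ^ 2)⁻¹ - (a + b)) z := by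
    exact (((hasDerivAt_inv hz.ne').const_mul ((b - a) * ν ^ 2)).sub
      ((hasDerivAt_id z).const_mul (a + b))).congr_deriv (by ring)
  rw [iteratedDeriv_succ, iteratedDeriv_one, hN'.deriv_eq,
    (hasDerivAt_mul_add_mul_of_bessel hf hf' hz hα hβ).deriv]

end Mercer

/-- The function `y = N_ν(z)` satisfies
`z² y'' + A(z) z y' + [B(z) + z² − ν²] y = 0` at every point (with `z > 0`) where
`a²z⁴ − p z² + q ≠ 0`, with
`A(z) = (−3a²z⁴ + p z² + q)/(a²z⁴ − p z² + q)`,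
`B(z) = (2a(a+b)z⁴ + 2r z²)/(a²z⁴ − p z² + q)`,
`p = 2a(aν² + c) + (a² − b²)`, `q = (aν² + c)² − ν²(a − b)²`,
`r = aν²(3a − b) + c(a + b)`. -/
theorem mercerN_ode (a b c ν : ℝ) (p q r : ℝ)
    (hp : p = 2 * a * (a * ν ^ 2 + c) + (a ^ 2 - b ^ 2))
    (hq : q = (a * ν ^ 2 + c) ^ 2 - ν ^ 2 * (a - b) ^ 2)
    (hr : r = a * ν ^ 2 * (3 * a - b) + c * (a + b)) :
    ∀ z : ℝ, 0 < z → a ^ 2 * z ^ 4 - p * z ^ 2 + q ≠ 0 →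
      z ^ 2 * iteratedDeriv 2 (mercerN a b c ν) z
        + ((-3 * a ^ 2 * z ^ 4 + p * z ^ 2 + q) / (a ^ 2 * z ^ 4 - p * z ^ 2 + q))
            * (z * deriv (mercerN a b c ν) z)
        + ((2 * a * (a + b) * z ^ 4 + 2 * r * z ^ 2) / (a ^ 2 * z ^ 4 - p * z ^ 2 + q)
            + z ^ 2 - ν ^ 2) * mercerN a b c ν z = 0 := by
  intro z hz hD
  have hJ : ∀ z, 0 < z → HasDerivAt (besselJ ν) (besselJDerivSeries ν 1 z) z :=
    fun _ => hasDerivAt_besselJ ν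
  have hJ' : ∀ z, 0 < z → HasDerivAt (besselJDerivSeries ν 1)
      (-besselJDerivSeries ν 1 z / z - (1 - ν ^ 2 / z ^ 2) * besselJ ν z) z :=
    fun _ => hasDerivAt_besselJDerivSeries_one ν
  have hN : mercerN a b c ν = mercerComb a b c (besselJ ν) := rfl
  have hz₀ := hz.ne'
  rw [hN, iteratedDeriv_two_mercerComb_of_bessel a b c hJ hJ' hz,
    deriv_mercerComb_of_bessel a b c hJ hJ' hz, mercerComb_eq_of_bessel a b c hJ hJ' hz]
  set D := a ^ 2 * z ^ 4 - p * z ^ 2 + q with hD_def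
  field_simp
  subst hp hq hr
  rw [hD_def]
  ring
end
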